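/- If L is a standard-or-continuous global language and L is CUI, then L is concurrency closed (closed under Mazurkiewicz-trace equivalence with independence given by disjoint participant sets). -/

import Mathlib

open scoped Classical

/-- Interactions `A→B:m` over participants and messages drawn from `ℕ`. -/
structure Interaction where
  snd : ℕ
  rcv : ℕ
  msg : ℕ
  ne : snd ≠ rcv

/-- Communication actions: outputs `AB!m` and inputs `AB?m`. -/
inductive Act where
  | out : ℕ → ℕ → ℕ → Act
  | inp : ℕ → ℕ → ℕ → Act
deriving DecidableEq

/-- Finite or infinite words over `σ`. -/
inductive Word (σ : Type) : Type where
  | fin : List σ → Word σ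
  | inf : (ℕ → σ) → Word σ

namespace Word

def get? {σ : Type} : Word σ → ℕ → Option σ
  | fin l, i => l[i]?
  | inf f, i => some (f i)

/-- Prefix relation on possibly infinite words. -/
def Pref {σ : Type} : Word σ → Word σ → Prop
  | fin l, fin l' => l <+: l'
  | fin l, inf g => ∀ i, i < l.length → l[i]? = some (g i)
  | inf f, inf g => f = g
  | inf _, fin _ => False

/-- Concatenation; if the first word is infinite the result is the first word. -/
def cat {σ : Type} : Word σ → Word σ → Word σ
  | fin l, fin l' => fin (l ++ l')
  | fin l, inf g => inf (fun i => if h : i < l.length then l.get ⟨i, h⟩ else g (i - l.length))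
  | inf f, _ => inf f

def Finite {σ : Type} : Word σ → Prop
  | fin _ => True
  | inf _ => False

end Word

/-- Prefix closure of a language. -/
def prefCl {σ : Type} (L : Set (Word σ)) : Set (Word σ) :=
  {z | ∃ z' ∈ L, Word.Pref z z'}

def PrefixClosed {σ : Type} (L : Set (Word σ)) : Prop := L = prefCl L

def iptp (a : Interaction) : Set ℕ := {a.snd, a.rcv}

def asubj : Act → ℕ
  | .out A _ _ => A
  | .inp _ B _ => B

def aptp : Act → Set ℕ
  | .out A B _ => {A, B}
  | .inp A B _ => {A, B}

/-- Participants of a word of interactions. -/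
def wptp (w : Word Interaction) : Set ℕ :=
  {X | ∃ i a, w.get? i = some a ∧ X ∈ iptp a}

/-- Participants of a language of interactions. -/
def lptp (L : Set (Word Interaction)) : Set ℕ :=
  {X | ∃ w ∈ L, X ∈ wptp w}

/-- Global language: prefix-closed with finitely many participants. -/
def IsGLang (L : Set (Word Interaction)) : Prop :=
  PrefixClosed L ∧ (lptp L).Finite

/-- Projection of an interaction on a participant. -/
def projI (X : ℕ) (a : Interaction) : Option Act :=
  if X = a.snd then some (.out a.snd a.rcv a.msg)
  else if X = a.rcv then some (.inp a.snd a.rcv a.msg)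
  else none

def projL (X : ℕ) (l : List Interaction) : List Act := l.filterMap (projI X)

/-- Projection of a (possibly infinite) word of interactions on a participant. -/
noncomputable def proj (X : ℕ) : Word Interaction → Word Act
  | .fin l => .fin (projL X l)
  | .inf f =>
    if {i | (projI X (f i)).isSome = true}.Infinite then
      .inf (fun n =>
        (projI X (f (Nat.nth (fun i => (projI X (f i)).isSome = true) n))).getD (.out 0 0 0))
    else
      .fin (projL X ((List.range (sSup {i | (projI X (f i)).isSome = true} + 1)).map f))

/-- A communicating system: a set of participants with a local language for each. -/
structure CSystem where
  P : Set ℕ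
  lang : ℕ → Set (Word Act)

/-- Well-formedness of a communicating system: finitely many participants, each
assigned a prefix-closed `X`-local language over the participants of the system,
different from `{ε}`. -/
def IsSystem (S : CSystem) : Prop :=
  S.P.Finite ∧ ∀ X ∈ S.P,
    PrefixClosed (S.lang X) ∧
    (∀ w ∈ S.lang X, ∀ i a, Word.get? w i = some a → asubj a = X ∧ aptp a ⊆ S.P) ∧
    S.lang X ≠ {Word.fin []}

/-- Synchronous semantics of a communicating system. -/
def sem (S : CSystem) : Set (Word Interaction) :=
  {w | wptp w ⊆ S.P ∧ ∀ X ∈ S.P, proj X w ∈ S.lang X}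

/-- Projection of a global language on a participant. -/
def projLang (X : ℕ) (L : Set (Word Interaction)) : Set (Word Act) := proj X '' L

/-- The communicating system projected from a global language. -/
noncomputable def projSys (L : Set (Word Interaction)) : CSystem :=
  ⟨lptp L, fun X => projLang X L⟩

/-- Synchronous semantics of the projected system, `⟦L↾⟧`. -/
noncomputable def gsem (L : Set (Word Interaction)) : Set (Word Interaction) :=
  sem (projSys L)

/-- Closure under unknown information. -/
def CUI (L : Set (Word Interaction)) : Prop :=
  ∀ (w1 w2 : List Interaction) (a : Interaction) (w : Word Interaction),
    Word.fin (w1 ++ [a]) ∈ L → Word.fin (w2 ++ [a]) ∈ L → w ∈ L →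
    proj a.snd w = proj a.snd (Word.fin w1) →
    proj a.rcv w = proj a.rcv (Word.fin w2) →
    w.cat (Word.fin [a]) ∈ L

/-- Continuity: an infinite word belongs to `L` whenever infinitely many of its
finite prefixes do. -/
def WContinuous {σ : Type} (L : Set (Word σ)) : Prop :=
  ∀ g : ℕ → σ,
    {l : List σ | Word.fin l ∈ L ∧ Word.Pref (Word.fin l) (Word.inf g)}.Infinite →
    Word.inf g ∈ L

/-- Standard-or-continuous language. -/
def SC (L : Set (Word Interaction)) : Prop :=
  (∀ w ∈ L, w.Finite) ∨ WContinuous L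

/-- Maximal word in a language. -/
def MaximalIn {σ : Type} (L : Set (Word σ)) (w : Word σ) : Prop :=
  w ∈ L ∧ ∀ w' ∈ L, Word.Pref w w' → w' = w

/-- Participant `X` distinguishes two words. -/
def Distinguishes (X : ℕ) (w1 w2 : Word Interaction) : Prop :=
  proj X w1 ≠ proj X w2 ∧
  ¬ (Word.Pref (proj X w1) (proj X w2) ∧ proj X w1 ≠ proj X w2) ∧
  ¬ (Word.Pref (proj X w2) (proj X w1) ∧ proj X w2 ≠ proj X w1)

/-- Branch-awareness of a global language. -/
def BranchAware (L : Set (Word Interaction)) : Prop :=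
  ∀ X ∈ lptp L, ∀ w1 w2, MaximalIn L w1 → MaximalIn L w2 →
    proj X w1 ≠ proj X w2 → Distinguishes X w1 w2

/-- Swapping two adjacent independent interactions. -/
inductive SwapStep : List Interaction → List Interaction → Prop
  | mk (u v : List Interaction) (a b : Interaction) (h : iptp a ∩ iptp b = ∅) :
      SwapStep (u ++ a :: b :: v) (u ++ b :: a :: v)

/-- Mazurkiewicz trace equivalence on finite words. -/
def TraceEqL : List Interaction → List Interaction → Prop :=
  Relation.ReflTransGen SwapStep

/-- `w ≪ w'` à la Gastin. -/
def wll (w w' : Word Interaction) : Prop :=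
  ∀ l : List Interaction, Word.Pref (Word.fin l) w →
    ∃ l' h : List Interaction, Word.Pref (Word.fin l') w' ∧ TraceEqL (l ++ h) l'

/-- Trace equivalence on possibly infinite words. -/
def TraceEq : Word Interaction → Word Interaction → Prop
  | .fin l, .fin l' => TraceEqL l l'
  | w, w' => wll w w' ∧ wll w' w

/-- Finite-state automata with states `Fin n`, all states accepting. -/
structure FSA (σ : Type) where
  n : ℕ
  q0 : Fin n
  tr : Fin n → σ → Fin n → Prop

inductive FinRun {σ : Type} (A : FSA σ) : Fin A.n → List σ → Fin A.n → Prop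
  | nil (q : Fin A.n) : FinRun A q [] q
  | cons {q q' q'' : Fin A.n} {a : σ} {l : List σ} :
      A.tr q a q' → FinRun A q' l q'' → FinRun A q (a :: l) q''

/-- The language of an FSA with all states accepting: finite words labelling runs
from the initial state, together with infinite words labelling infinite runs
(Büchi acceptance with all states accepting). -/
def LangSet {σ : Type} (A : FSA σ) : Set (Word σ) :=
  {w | match w with
       | .fin l => ∃ q, FinRun A A.q0 l q
       | .inf f => ∃ qs : ℕ → Fin A.n, qs 0 = A.q0 ∧ ∀ i, A.tr (qs i) (f i) (qs (i+1))}

/-- Configurations of a system of CFSMs. -/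
def Conf (M : ℕ → FSA Act) : Type := (X : ℕ) → Fin (M X).n

/-- A synchronisation step of the product automaton. -/
def PStep (P : Finset ℕ) (M : ℕ → FSA Act) (s : Conf M) (a : Interaction) (s' : Conf M) : Prop :=
  a.snd ∈ P ∧ a.rcv ∈ P ∧
  (M a.snd).tr (s a.snd) (Act.out a.snd a.rcv a.msg) (s' a.snd) ∧
  (M a.rcv).tr (s a.rcv) (Act.inp a.snd a.rcv a.msg) (s' a.rcv) ∧
  ∀ X, X ≠ a.snd → X ≠ a.rcv → s X = s' X

def initConf (M : ℕ → FSA Act) : Conf M := fun X => (M X).q0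

inductive PRun (P : Finset ℕ) (M : ℕ → FSA Act) : Conf M → List Interaction → Conf M → Prop
  | nil (s : Conf M) : PRun P M s [] s
  | cons {s s' s'' : Conf M} {a : Interaction} {l : List Interaction} :
      PStep P M s a s' → PRun P M s' l s'' → PRun P M s (a :: l) s''

/-- The language of the synchronous product automaton of a system of CFSMs. -/
def prodLang (P : Finset ℕ) (M : ℕ → FSA Act) : Set (Word Interaction) :=
  {w | match w with
       | .fin l => ∃ s, PRun P M (initConf M) l s
       | .inf f => ∃ cs : ℕ → Conf M, cs 0 = initConf M ∧
           ∀ i, PStep P M (cs i) (f i) (cs (i+1))}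

/-! Closure under unknown information turns any reordering that no participant can observe into
a reordering inside `L`: swapping two adjacent independent interactions changes no projection, so
CUI lets us append them in the other order, and then re-append the rest of the word one interaction
at a time. Trace equivalence of infinite words reduces to this on finite prefixes, and continuity
takes the limit. -/

lemma PrefixClosed.mem_of_pref {σ : Type} {L : Set (Word σ)} (hpc : PrefixClosed L)
    {z z' : Word σ} (hp : Word.Pref z z') (hz' : z' ∈ L) : z ∈ L := by
  rw [hpc]
  exact ⟨z', hz', hp⟩

lemma PrefixClosed.mem_of_append_mem {σ : Type} {L : Set (Word σ)} (hpc : PrefixClosed L)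
    {l l' : List σ} (h : Word.fin (l ++ l') ∈ L) : Word.fin l ∈ L :=
  hpc.mem_of_pref (show Word.Pref _ (Word.fin (l ++ l')) from List.prefix_append l l') h

lemma Word.pref_map_range {σ : Type} (g : ℕ → σ) (n : ℕ) :
    Word.Pref (Word.fin ((List.range n).map g)) (Word.inf g) := by
  intro i hi
  simp only [List.length_map, List.length_range] at hi
  simp [hi]

lemma projI_eq_none {X : ℕ} {a : Interaction} (h : X ∉ iptp a) : projI X a = none := by
  simp only [iptp, Set.mem_insert_iff, Set.mem_singleton_iff, not_or] at h
  simp [projI, h.1, h.2]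

lemma mem_iptp_of_projI_eq_some {X : ℕ} {a : Interaction} {act : Act}
    (h : projI X a = some act) : X ∈ iptp a := by
  by_contra hX
  simp [projI_eq_none hX] at h

lemma notMem_iptp_of_inter_eq_empty {a b : Interaction} (h : iptp a ∩ iptp b = ∅) {X : ℕ}
    (hX : X ∈ iptp a) : X ∉ iptp b :=
  fun hb => Set.eq_empty_iff_forall_notMem.mp h X ⟨hX, hb⟩

lemma projL_append_singleton_of_notMem {X : ℕ} {a : Interaction} (h : X ∉ iptp a)
    (u : List Interaction) : projL X (u ++ [a]) = projL X u := by
  simp [projL, projI_eq_none h]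

lemma SwapStep.length_eq {l l' : List Interaction} (h : SwapStep l l') :
    l.length = l'.length := by
  cases h; simp

lemma TraceEqL.length_eq {l l' : List Interaction} (h : TraceEqL l l') :
    l.length = l'.length := by
  induction h with
  | refl => rfl
  | tail _ hs ih => exact ih.trans hs.length_eq

lemma SwapStep.symm {l l' : List Interaction} (h : SwapStep l l') : SwapStep l' l := by
  cases h with
  | mk u v a b hd => exact SwapStep.mk u v b a (by rwa [Set.inter_comm])

lemma TraceEqL.symm {l l' : List Interaction} (h : TraceEqL l l') : TraceEqL l' l := by
  induction h with
  | refl => exact Relation.ReflTransGen.refl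
  | tail _ hs ih => exact Relation.ReflTransGen.head hs.symm ih

lemma SwapStep.projL_eq {l l' : List Interaction} (h : SwapStep l l') (X : ℕ) :
    projL X l = projL X l' := by
  cases h with
  | mk u v a b hd =>
    have hab : ∀ {act}, projI X a = some act → projI X b = none := fun ha =>
      projI_eq_none (notMem_iptp_of_inter_eq_empty hd (mem_iptp_of_projI_eq_some ha))
    simp only [projL, List.filterMap_append, List.filterMap_cons]
    rcases ha : projI X a with _ | act
    · simp
    · simp [hab ha]

lemma not_wll_inf_fin (f : ℕ → Interaction) (l : List Interaction) :
    ¬ wll (Word.inf f) (Word.fin l) := by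
  intro h
  obtain ⟨l', h', hpref, htr⟩ := h _ (Word.pref_map_range f (l.length + 1))
  have hlen := htr.length_eq
  have hle : l'.length ≤ l.length := hpref.length_le
  simp only [List.length_append, List.length_map, List.length_range] at hlen
  omega

namespace CUI

lemma append_singleton_mem {L : Set (Word Interaction)} (hcui : CUI L)
    {s t : List Interaction} {c : Interaction} (hs : Word.fin (s ++ [c]) ∈ L)
    (ht : Word.fin t ∈ L) (hsnd : projL c.snd t = projL c.snd s)
    (hrcv : projL c.rcv t = projL c.rcv s) : Word.fin (t ++ [c]) ∈ L :=
  hcui s s c (Word.fin t) hs hs ht (congrArg Word.fin hsnd) (congrArg Word.fin hrcv)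

lemma append_mem_of_projL_eq {L : Set (Word Interaction)} (hpc : PrefixClosed L)
    (hcui : CUI L) (v : List Interaction) :
    ∀ {s t : List Interaction}, (∀ X, projL X s = projL X t) →
      Word.fin t ∈ L → Word.fin (s ++ v) ∈ L → Word.fin (t ++ v) ∈ L := by
  induction v with
  | nil => intro s t _ ht _; simpa using ht
  | cons c v ih =>
    intro s t hproj ht hs
    rw [← List.singleton_append, ← List.append_assoc] at hs ⊢
    have hsc : Word.fin (s ++ [c]) ∈ L := hpc.mem_of_append_mem hs
    have htc := hcui.append_singleton_mem hsc ht (hproj c.snd).symm (hproj c.rcv).symm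
    refine ih (fun X => ?_) htc hs
    simp only [projL, List.filterMap_append] at hproj ⊢
    rw [hproj X]

lemma swapStep_mem {L : Set (Word Interaction)} (hpc : PrefixClosed L) (hcui : CUI L)
    {l l' : List Interaction} (h : SwapStep l l') (hl : Word.fin l ∈ L) :
    Word.fin l' ∈ L := by
  cases h with
  | mk u v a b hd =>
    have hba : iptp b ∩ iptp a = ∅ := by rwa [Set.inter_comm]
    have habv : Word.fin (u ++ [a, b] ++ v) ∈ L := by simpa using hl
    have hab : Word.fin (u ++ [a] ++ [b]) ∈ L := by simpa using hpc.mem_of_append_mem habv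
    have ha : Word.fin (u ++ [a]) ∈ L := hpc.mem_of_append_mem hab
    have hu : Word.fin u ∈ L := hpc.mem_of_append_mem ha
    have hub : Word.fin (u ++ [b]) ∈ L :=
      hcui.append_singleton_mem hab hu
        (projL_append_singleton_of_notMem (notMem_iptp_of_inter_eq_empty hba (Or.inl rfl)) u).symm
        (projL_append_singleton_of_notMem (notMem_iptp_of_inter_eq_empty hba (Or.inr rfl)) u).symm
    have hbua : Word.fin (u ++ [b] ++ [a]) ∈ L :=
      hcui.append_singleton_mem ha hub
        (projL_append_singleton_of_notMem (notMem_iptp_of_inter_eq_empty hd (Or.inl rfl)) u)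
        (projL_append_singleton_of_notMem (notMem_iptp_of_inter_eq_empty hd (Or.inr rfl)) u)
    have hproj : ∀ X, projL X (u ++ [a, b]) = projL X (u ++ [b, a]) :=
      (SwapStep.mk u [] a b hd).projL_eq
    simpa using hcui.append_mem_of_projL_eq hpc v hproj (by simpa using hbua) habv

lemma traceEqL_mem {L : Set (Word Interaction)} (hpc : PrefixClosed L) (hcui : CUI L)
    {l l' : List Interaction} (h : TraceEqL l l') (hl : Word.fin l ∈ L) :
    Word.fin l' ∈ L := by
  induction h with
  | refl => exact hl
  | tail _ hs ih => exact hcui.swapStep_mem hpc hs ih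

lemma fin_mem_of_wll {L : Set (Word Interaction)} (hpc : PrefixClosed L) (hcui : CUI L)
    {w w' : Word Interaction} (hll : wll w' w) (hw : w ∈ L) {l : List Interaction}
    (hl : Word.Pref (Word.fin l) w') : Word.fin l ∈ L := by
  obtain ⟨l', h, hpref, htr⟩ := hll l hl
  exact hpc.mem_of_append_mem (hcui.traceEqL_mem hpc htr.symm (hpc.mem_of_pref hpref hw))

end CUI

lemma WContinuous.inf_mem {σ : Type} {L : Set (Word σ)} (hcont : WContinuous L) (g : ℕ → σ)
    (h : ∀ n, Word.fin ((List.range n).map g) ∈ L) : Word.inf g ∈ L := by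
  refine hcont g (Set.infinite_of_injective_forall_mem (f := fun n => (List.range n).map g)
    (fun m n hmn => ?_) fun n => ⟨h n, Word.pref_map_range g n⟩)
  simpa using congrArg List.length hmn

/-- A standard-or-continuous CUI global language is concurrency closed. -/
theorem stmt12 (L : Set (Word Interaction)) (hL : IsGLang L)
    (hsc : SC L) (hcui : CUI L) :
    ∀ w ∈ L, ∀ wp : Word Interaction, TraceEq w wp → wp ∈ L := by
  rintro (l | f) hw (l' | g) htr
  · exact hcui.traceEqL_mem hL.1 htr hw
  · exact absurd htr.2 (not_wll_inf_fin g l)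
  · exact absurd htr.1 (not_wll_inf_fin f l')
  · rcases hsc with hfin | hcont
    · exact (hfin _ hw).elim
    · exact hcont.inf_mem g fun n =>
        hcui.fin_mem_of_wll hL.1 htr.2 hw (Word.pref_map_range g n)
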